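/- arXiv:1901.06141 — 3 statements merged into one kernel-verified Lean document; each statement's English description precedes it below -/
import Mathlib

section
/- Let f = F(c*) be the objective vector produced by Algorithm 1, where c* is a unit vector in the span of the right-singular vectors of 𝓛 whose singular values are at most s_{i*}. Then ‖Df(x̄)ᵀᾱ‖₂ ≤ s_{i*} for every data point (x̄, ᾱ) ∈ 𝒟. In particular, if s_{i*} = 0, every data point is extended Pareto critical for f. -/
/-! With `w = Vᵀ c*` and `Σ = rectDiagonal s`, orthogonality of `U` and `V` gives
`‖𝓛 c*‖² = ‖Σ w‖² ≤ ∑ q, (s q w q)²` and `‖w‖ = ‖c*‖ = 1`. Since `c*` lies in the span of the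
columns `V_i`, `i ≤ i*`, the coordinates of `w` beyond `i*` vanish, so monotonicity of `s` bounds
`‖𝓛 c*‖²` by `s i*²`. The KKT residual `∑ i, ᾱ i • ∇ f i (x̄)` at a data point is the block of
`𝓛 c*` belonging to that point, hence has norm at most `‖𝓛 c*‖`. -/

open Matrix Finset

theorem Matrix.dotProduct_self_mulVec_of_transpose_mul_self {ι κ R : Type*} [Fintype ι]
    [Fintype κ] [DecidableEq ι] [CommRing R] {A : Matrix κ ι R} (hA : Aᵀ * A = 1) (v : ι → R) :
    (A *ᵥ v) ⬝ᵥ (A *ᵥ v) = v ⬝ᵥ v := by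
  rw [dotProduct_mulVec, ← vecMul_transpose, vecMul_vecMul, hA, vecMul_one]

def Matrix.rectDiagonal {α : Type*} [Zero α] {p m : ℕ} (s : Fin m → α) :
    Matrix (Fin p) (Fin m) α :=
  Matrix.of fun r q => if (r : ℕ) = q then s q else 0

theorem Matrix.rectDiagonal_mulVec_apply {R : Type*} [NonUnitalNonAssocSemiring R] {p m : ℕ}
    (s w : Fin m → R) (r : Fin p) :
    (rectDiagonal s *ᵥ w) r = if h : (r : ℕ) < m then s ⟨r, h⟩ * w ⟨r, h⟩ else 0 := by
  simp only [mulVec, dotProduct, rectDiagonal, of_apply, ite_mul, zero_mul]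
  split_ifs with h
  · rw [sum_eq_single ⟨r, h⟩ (fun q _ hq => if_neg fun hrq => hq (Fin.ext hrq.symm))
      (fun h' => absurd (mem_univ _) h'), if_pos rfl]
  · exact sum_eq_zero fun q _ => if_neg fun (hrq : (r : ℕ) = q) => h (hrq ▸ q.isLt)

theorem Fin.sum_dite_lt_le {M : Type*} [AddCommMonoid M] [PartialOrder M]
    [IsOrderedAddMonoid M] {p m : ℕ} {t : Fin m → M} (ht : ∀ q, 0 ≤ t q) :
    ∑ r : Fin p, (if h : (r : ℕ) < m then t ⟨r, h⟩ else 0) ≤ ∑ q, t q := by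
  set G : ℕ → M := fun k => if h : k < m then t ⟨k, h⟩ else 0
  calc ∑ r : Fin p, G r = ∑ k ∈ range p, G k := Fin.sum_univ_eq_sum_range G p
    _ = ∑ k ∈ range p with k < m, G k :=
        (sum_filter_of_ne fun k _ hk => by by_contra h; exact hk (dif_neg h)).symm
    _ ≤ ∑ k ∈ range m, G k :=
        sum_le_sum_of_subset_of_nonneg (fun k hk => mem_range.2 (mem_filter.1 hk).2)
          fun k _ _ => by simp only [G]; split <;> simp [ht]
    _ = ∑ q, t q := by rw [← Fin.sum_univ_eq_sum_range]; simp [G]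

theorem Matrix.dotProduct_self_rectDiagonal_mulVec_le {R : Type*} [CommRing R] [LinearOrder R]
    [IsStrictOrderedRing R] {p m : ℕ} (s w : Fin m → R) :
    (rectDiagonal (p := p) s *ᵥ w) ⬝ᵥ (rectDiagonal s *ᵥ w) ≤ ∑ q, (s q * w q) ^ 2 := by
  calc (rectDiagonal (p := p) s *ᵥ w) ⬝ᵥ (rectDiagonal s *ᵥ w)
      = ∑ r : Fin p, (if h : (r : ℕ) < m then (s ⟨r, h⟩ * w ⟨r, h⟩) ^ 2 else 0) := by
        refine sum_congr rfl fun r _ => ?_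
        rw [rectDiagonal_mulVec_apply, ← sq]
        split <;> simp
    _ ≤ ∑ q, (s q * w q) ^ 2 :=
        Fin.sum_dite_lt_le (t := fun q => (s q * w q) ^ 2) fun q => sq_nonneg _

theorem Matrix.transpose_mulVec_eq_zero_of_mem_span_cols {ι κ R : Type*} [Fintype κ]
    [LinearOrder ι] [DecidableEq ι] [CommRing R] {V : Matrix κ ι R} (hV : Vᵀ * V = 1) {i : ι}
    {c : κ → R} (hc : c ∈ Submodule.span R {v : κ → R | ∃ j ≤ i, v = fun q => V q j})
    {q : ι} (hq : i < q) : (Vᵀ *ᵥ c) q = 0 := by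
  suffices Submodule.span R {v : κ → R | ∃ j ≤ i, v = fun q => V q j} ≤
      LinearMap.ker ((LinearMap.proj q).comp (mulVecLin Vᵀ)) from this hc
  rw [Submodule.span_le]
  rintro _ ⟨j, hj, rfl⟩
  have hcol : (Vᵀ *ᵥ fun q => V q j) q = (Vᵀ * V) q j := by simp [mulVec, mul_apply, dotProduct]
  simp only [SetLike.mem_coe, LinearMap.mem_ker, LinearMap.comp_apply, mulVecLin_apply,
    LinearMap.proj_apply, hcol, hV, one_apply_ne (hj.trans_lt hq).ne']

theorem Finset.sum_sq_mul_le_of_eq_zero_of_lt {ι R : Type*} [Fintype ι] [LinearOrder ι]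
    [CommRing R] [LinearOrder R] [IsStrictOrderedRing R] {s w : ι → R} (hs0 : ∀ q, 0 ≤ s q)
    (hmono : Monotone s) {i : ι} (hw : ∀ q, i < q → w q = 0) :
    ∑ q, (s q * w q) ^ 2 ≤ s i ^ 2 * ∑ q, w q ^ 2 := by
  rw [mul_sum]
  refine sum_le_sum fun q _ => ?_
  rcases le_or_gt q i with hqi | hiq
  · rw [mul_pow]
    gcongr
    · exact hs0 q
    · exact hmono hqi
  · simp [hw q hiq]

theorem Matrix.dotProduct_self_mulVec_le_of_svd {p m : ℕ} {L : Matrix (Fin p) (Fin m) ℝ}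
    {U : Matrix (Fin p) (Fin p) ℝ} {V : Matrix (Fin m) (Fin m) ℝ} {s : Fin m → ℝ}
    (hU : U ∈ orthogonalGroup (Fin p) ℝ) (hV : V ∈ orthogonalGroup (Fin m) ℝ)
    (hs0 : ∀ q, 0 ≤ s q) (hmono : Monotone s)
    (hL : L = U * (rectDiagonal s : Matrix (Fin p) (Fin m) ℝ) * Vᵀ) {i : Fin m}
    {c : Fin m → ℝ} (hc : c ∈ Submodule.span ℝ {v : Fin m → ℝ | ∃ j ≤ i, v = fun q => V q j}) :
    (L *ᵥ c) ⬝ᵥ (L *ᵥ c) ≤ s i ^ 2 * (c ⬝ᵥ c) := by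
  set w := Vᵀ *ᵥ c
  have hLc : L *ᵥ c = U *ᵥ (rectDiagonal s *ᵥ w) := by rw [hL, mulVec_mulVec, mulVec_mulVec]
  have hw : w ⬝ᵥ w = c ⬝ᵥ c := dotProduct_self_mulVec_of_transpose_mul_self
    (by rw [transpose_transpose]; exact (mem_orthogonalGroup_iff _ ℝ).1 hV) c
  calc (L *ᵥ c) ⬝ᵥ (L *ᵥ c) = (rectDiagonal s *ᵥ w) ⬝ᵥ (rectDiagonal s *ᵥ w) := by
        rw [hLc, dotProduct_self_mulVec_of_transpose_mul_self ((mem_orthogonalGroup_iff' _ ℝ).1 hU)]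
    _ ≤ ∑ q, (s q * w q) ^ 2 := dotProduct_self_rectDiagonal_mulVec_le s w
    _ ≤ s i ^ 2 * ∑ q, w q ^ 2 := sum_sq_mul_le_of_eq_zero_of_lt hs0 hmono fun q hq =>
        transpose_mulVec_eq_zero_of_mem_span_cols ((mem_orthogonalGroup_iff' _ ℝ).1 hV) hc hq
    _ = s i ^ 2 * (c ⬝ᵥ c) := by rw [← hw]; simp only [dotProduct, sq]

theorem gradient_fun_sum_mul {F ι : Type*} [NormedAddCommGroup F] [InnerProductSpace ℝ F]
    [CompleteSpace F] [Fintype ι] (c : ι → ℝ) {b : ι → F → ℝ} {x : F}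
    (hb : ∀ l, DifferentiableAt ℝ (b l) x) :
    gradient (fun y => ∑ l, c l * b l y) x = ∑ l, c l • gradient (b l) x := by
  refine HasGradientAt.gradient ((hasGradientAt_iff_hasFDerivAt).2 ?_)
  simp only [map_sum, map_smul, toDual_gradient]
  exact HasFDerivAt.fun_sum fun l _ => (hb l).hasFDerivAt.const_mul (c l)

theorem sum_sq_comp_le_dotProduct_self {ι κ R : Type*} [Fintype ι] [Fintype κ] [CommRing R]
    [LinearOrder R] [IsStrictOrderedRing R] {e : ι → κ} (he : Function.Injective e) (y : κ → R) :
    ∑ i, y (e i) ^ 2 ≤ y ⬝ᵥ y := by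
  calc ∑ i, y (e i) ^ 2 = ∑ r ∈ univ.map ⟨e, he⟩, y r ^ 2 :=
        (sum_map univ ⟨e, he⟩ fun r => y r ^ 2).symm
    _ ≤ ∑ r, y r ^ 2 := sum_le_univ_sum_of_nonneg fun r => sq_nonneg _
    _ = y ⬝ᵥ y := by simp only [dotProduct, sq]

theorem kkt_residual_apply_eq_mulVec {n d k N : ℕ} {b : Fin d → EuclideanSpace ℝ (Fin n) → ℝ}
    {xd : Fin N → EuclideanSpace ℝ (Fin n)} {αd : Fin N → Fin k → ℝ}
    {𝓛 : Matrix (Fin (N * n)) (Fin (k * d)) ℝ}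
    (h𝓛 : ∀ (r : Fin (N * n)) (q : Fin (k * d)),
      𝓛 r q = αd (finProdFinEquiv.symm r).1 (finProdFinEquiv.symm q).1 *
        gradient (b (finProdFinEquiv.symm q).2) (xd (finProdFinEquiv.symm r).1)
          (finProdFinEquiv.symm r).2)
    {c : Fin (k * d) → ℝ} {f : Fin k → EuclideanSpace ℝ (Fin n) → ℝ}
    (hf : ∀ i y, f i y = ∑ l, c (finProdFinEquiv (i, l)) * b l y) (j : Fin N)
    (hb : ∀ l, DifferentiableAt ℝ (b l) (xd j)) (m : Fin n) :
    (∑ i, αd j i • gradient (f i) (xd j)) m = (𝓛 *ᵥ c) (finProdFinEquiv (j, m)) := by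
  have hgrad : ∀ i, gradient (f i) (xd j) =
      ∑ l, c (finProdFinEquiv (i, l)) • gradient (b l) (xd j) := fun i => by
    rw [funext (hf i), gradient_fun_sum_mul _ hb]
  rw [mulVec, dotProduct, ← finProdFinEquiv.sum_comp, Fintype.sum_prod_type]
  simp only [hgrad, WithLp.ofLp_sum, WithLp.ofLp_smul, Finset.sum_apply, Pi.smul_apply,
    smul_eq_mul, mul_sum, h𝓛, Equiv.symm_apply_apply]
  exact sum_congr rfl fun i _ => sum_congr rfl fun l _ => by ring

theorem algorithm_kkt_residual_bound_general {n d k N : ℕ}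
    (b : Fin d → EuclideanSpace ℝ (Fin n) → ℝ)
    (hb : ∀ j, Differentiable ℝ (b j))
    (xd : Fin N → EuclideanSpace ℝ (Fin n)) (αd : Fin N → Fin k → ℝ)
    (𝓛 : Matrix (Fin (N * n)) (Fin (k * d)) ℝ)
    (h𝓛 : ∀ (r : Fin (N * n)) (q : Fin (k * d)),
      𝓛 r q = αd (finProdFinEquiv.symm r).1 (finProdFinEquiv.symm q).1 *
        gradient (b (finProdFinEquiv.symm q).2) (xd (finProdFinEquiv.symm r).1)
          (finProdFinEquiv.symm r).2)
    (U : Matrix (Fin (N * n)) (Fin (N * n)) ℝ)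
    (V : Matrix (Fin (k * d)) (Fin (k * d)) ℝ)
    (s : Fin (k * d) → ℝ)
    (hU : U ∈ Matrix.orthogonalGroup (Fin (N * n)) ℝ)
    (hV : V ∈ Matrix.orthogonalGroup (Fin (k * d)) ℝ)
    (hs0 : ∀ i, 0 ≤ s i) (hmono : Monotone s)
    (hSVD : 𝓛 = U * (Matrix.of fun (r : Fin (N * n)) (q : Fin (k * d)) =>
      if (r : ℕ) = (q : ℕ) then s q else 0) * Vᵀ)
    (istar : Fin (k * d)) (cstar : Fin (k * d) → ℝ)
    (hunit : Real.sqrt (∑ q, cstar q ^ 2) = 1)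
    (hspan : cstar ∈ Submodule.span ℝ
      {v : Fin (k * d) → ℝ | ∃ i ≤ istar, v = fun j => V j i})
    (f : Fin k → EuclideanSpace ℝ (Fin n) → ℝ)
    (hf : ∀ (i : Fin k) (y : EuclideanSpace ℝ (Fin n)),
      f i y = ∑ l, cstar (finProdFinEquiv (i, l)) * b l y) :
    (∀ j, ‖∑ i, αd j i • gradient (f i) (xd j)‖ ≤ s istar) ∧
    (s istar = 0 → ∀ j, ∑ i, αd j i • gradient (f i) (xd j) = 0) := by
  have hc : cstar ⬝ᵥ cstar = 1 := by
    rw [Real.sqrt_eq_one] at hunit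
    simpa only [dotProduct, sq] using hunit
  have hLc := dotProduct_self_mulVec_le_of_svd hU hV hs0 hmono hSVD hspan
  have hbound : ∀ j, ‖∑ i, αd j i • gradient (f i) (xd j)‖ ≤ s istar := fun j => by
    refine (pow_le_pow_iff_left₀ (norm_nonneg _) (hs0 istar) two_ne_zero).1 ?_
    simp only [EuclideanSpace.real_norm_sq_eq,
      kkt_residual_apply_eq_mulVec h𝓛 hf j fun l => (hb l).differentiableAt]
    calc _ ≤ (𝓛 *ᵥ cstar) ⬝ᵥ (𝓛 *ᵥ cstar) :=
          sum_sq_comp_le_dotProduct_self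
            (finProdFinEquiv.injective.comp (Prod.mk_right_injective j)) _
      _ ≤ s istar ^ 2 := by simpa only [hc, mul_one] using hLc
  exact ⟨hbound, fun h0 j => norm_le_zero_iff.1 (h0 ▸ hbound j)⟩

/-- Theorem 3.5 of the paper: if `f = F(c*)` where `c*` is a unit vector in
the span of the right-singular vectors of the stacked data matrix `𝓛` whose
singular values are at most `s i*`, then the KKT residual
`‖Df(x̄)ᵀᾱ‖₂ ≤ s i*` for every data point; in particular, if `s i* = 0`,
every data point is extended Pareto critical for `f`. -/
theorem algorithm_kkt_residual_bound {n d k N : ℕ} (hdim : k * d ≤ N * n)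
    (b : Fin d → EuclideanSpace ℝ (Fin n) → ℝ)
    (hb : ∀ j, Differentiable ℝ (b j))
    (xd : Fin N → EuclideanSpace ℝ (Fin n)) (αd : Fin N → Fin k → ℝ)
    (hα : ∀ j, (∀ i, 0 ≤ αd j i) ∧ ∑ i, αd j i = 1)
    (𝓛 : Matrix (Fin (N * n)) (Fin (k * d)) ℝ)
    (h𝓛 : ∀ (r : Fin (N * n)) (q : Fin (k * d)),
      𝓛 r q = αd (finProdFinEquiv.symm r).1 (finProdFinEquiv.symm q).1 *
        gradient (b (finProdFinEquiv.symm q).2) (xd (finProdFinEquiv.symm r).1)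
          (finProdFinEquiv.symm r).2)
    (U : Matrix (Fin (N * n)) (Fin (N * n)) ℝ)
    (V : Matrix (Fin (k * d)) (Fin (k * d)) ℝ)
    (s : Fin (k * d) → ℝ)
    (hU : U ∈ Matrix.orthogonalGroup (Fin (N * n)) ℝ)
    (hV : V ∈ Matrix.orthogonalGroup (Fin (k * d)) ℝ)
    (hs0 : ∀ i, 0 ≤ s i) (hmono : Monotone s)
    (hSVD : 𝓛 = U * (Matrix.of fun (r : Fin (N * n)) (q : Fin (k * d)) =>
      if (r : ℕ) = (q : ℕ) then s q else 0) * Vᵀ)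
    (istar : Fin (k * d)) (cstar : Fin (k * d) → ℝ)
    (hunit : Real.sqrt (∑ q, cstar q ^ 2) = 1)
    (hspan : cstar ∈ Submodule.span ℝ
      {v : Fin (k * d) → ℝ | ∃ i ≤ istar, v = fun j => V j i})
    (f : Fin k → EuclideanSpace ℝ (Fin n) → ℝ)
    (hf : ∀ (i : Fin k) (y : EuclideanSpace ℝ (Fin n)),
      f i y = ∑ l, cstar (finProdFinEquiv (i, l)) * b l y) :
    (∀ j, ‖∑ i, αd j i • gradient (f i) (xd j)‖ ≤ s istar) ∧
    (s istar = 0 → ∀ j, ∑ i, αd j i • gradient (f i) (xd j) = 0) :=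
  algorithm_kkt_residual_bound_general b hb xd αd 𝓛 h𝓛 U V s hU hV hs0 hmono hSVD istar cstar hunit
    hspan f hf
end

section
/- Consider f : ℝ² → ℝ², f(x) = (−3x₁ + x₁³ + x₂³, −3x₂ + x₁³ + x₂³). A point x ∈ ℝ² is Pareto critical for f if and only if x₁² + x₂² = 1, and in that case the (unique) KKT vector is α = (x₁², x₂²)ᵀ. That is, the Pareto critical set of f is exactly the unit circle S¹. -/
/-! Both objectives share the cubic part `x₁³ + x₂³`, so `∇fᵢ(x) = 3 (x₁², x₂²) - 3 eᵢ`. For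
weights with `α₁ + α₂ = 1` this gives `α₁ ∇f₁(x) + α₂ ∇f₂(x) = 3 ((x₁², x₂²) - α)`: stationarity
forces `α = (x₁², x₂²)`, and this vector lies in the simplex exactly when `x₁² + x₂² = 1`. -/

open scoped BigOperators

noncomputable def circF1 (y : EuclideanSpace ℝ (Fin 2)) : ℝ :=
  -3 * y 0 + (y 0) ^ 3 + (y 1) ^ 3

noncomputable def circF2 (y : EuclideanSpace ℝ (Fin 2)) : ℝ :=
  -3 * y 1 + (y 0) ^ 3 + (y 1) ^ 3

section GradientCalculus

variable {F : Type*} [NormedAddCommGroup F] [InnerProductSpace ℝ F] [CompleteSpace F]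
  {f g : F → ℝ} {f' g' : F}

theorem HasGradientAt.add {x : F} (hf : HasGradientAt f f' x) (hg : HasGradientAt g g' x) :
    HasGradientAt (f + g) (f' + g') x := by
  rw [hasGradientAt_iff_hasFDerivAt, map_add] at *
  exact hf.add hg

theorem HasDerivAt.comp_hasGradientAt (x : F) {h : ℝ → ℝ} {h' : ℝ} (hh : HasDerivAt h h' (f x))
    (hf : HasGradientAt f f' x) : HasGradientAt (h ∘ f) (h' • f') x := by
  rw [hasGradientAt_iff_hasFDerivAt] at *
  refine (hh.comp_hasFDerivAt x hf).congr_fderiv ?_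
  ext y
  simp

end GradientCalculus

namespace EuclideanSpace

theorem hasGradientAt_apply {ι : Type*} [Fintype ι] [DecidableEq ι] (i : ι)
    (x : EuclideanSpace ℝ ι) :
    HasGradientAt (fun y : EuclideanSpace ℝ ι => y i) (single i 1) x := by
  rw [hasGradientAt_iff_hasFDerivAt]
  refine (proj i : EuclideanSpace ℝ ι →L[ℝ] ℝ).hasFDerivAt.congr_fderiv ?_
  ext y
  simp [InnerProductSpace.toDual_apply_apply, inner_single_left]

theorem hasGradientAt_add_comp_apply {φ ψ : ℝ → ℝ} {φ' ψ' : ℝ} {x : EuclideanSpace ℝ (Fin 2)}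
    (hφ : HasDerivAt φ φ' (x 0)) (hψ : HasDerivAt ψ ψ' (x 1)) :
    HasGradientAt (fun y : EuclideanSpace ℝ (Fin 2) => φ (y 0) + ψ (y 1)) !₂[φ', ψ'] x := by
  have hv : !₂[φ', ψ'] = φ' • single 0 1 + ψ' • single 1 1 := by
    refine PiLp.ext fun i => ?_
    fin_cases i <;> simp
  rw [hv]
  exact (hφ.comp_hasGradientAt x (hasGradientAt_apply 0 x)).add
    (hψ.comp_hasGradientAt x (hasGradientAt_apply 1 x))

end EuclideanSpace

theorem hasDerivAt_neg_three_mul_add_cube (t : ℝ) :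
    HasDerivAt (fun s => -3 * s + s ^ 3) (3 * t ^ 2 - 3) t := by
  refine (((hasDerivAt_id' t).const_mul (-3)).fun_add (hasDerivAt_pow 3 t)).congr_deriv ?_
  norm_num
  ring

theorem hasDerivAt_cube (t : ℝ) : HasDerivAt (fun s => s ^ 3) (3 * t ^ 2) t := by
  simpa using hasDerivAt_pow 3 t

theorem gradient_circF1 (x : EuclideanSpace ℝ (Fin 2)) :
    gradient circF1 x = !₂[3 * x 0 ^ 2 - 3, 3 * x 1 ^ 2] :=
  (EuclideanSpace.hasGradientAt_add_comp_apply (hasDerivAt_neg_three_mul_add_cube _)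
    (hasDerivAt_cube _)).gradient

theorem gradient_circF2 (x : EuclideanSpace ℝ (Fin 2)) :
    gradient circF2 x = !₂[3 * x 0 ^ 2, 3 * x 1 ^ 2 - 3] := by
  have hF : circF2 = fun y => y 0 ^ 3 + (-3 * y 1 + y 1 ^ 3) := by
    ext y
    rw [circF2]
    ring
  rw [hF]
  exact (EuclideanSpace.hasGradientAt_add_comp_apply (hasDerivAt_cube _)
    (hasDerivAt_neg_three_mul_add_cube _)).gradient

theorem weighted_gradient_circF_eq_zero_iff (x : EuclideanSpace ℝ (Fin 2)) {a b : ℝ}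
    (hab : a + b = 1) :
    a • gradient circF1 x + b • gradient circF2 x = 0 ↔ a = x 0 ^ 2 ∧ b = x 1 ^ 2 := by
  rw [gradient_circF1, gradient_circF2, PiLp.ext_iff, Fin.forall_fin_two]
  simp only [PiLp.add_apply, PiLp.smul_apply, PiLp.zero_apply, Matrix.cons_val_zero,
    Matrix.cons_val_one, Matrix.cons_val_fin_one, smul_eq_mul]
  constructor
  · rintro ⟨h0, h1⟩
    constructor
    · linear_combination (-1/3) * h0 + x 0 ^ 2 * hab
    · linear_combination (-1/3) * h1 + x 1 ^ 2 * hab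
  · rintro ⟨rfl, rfl⟩
    constructor
    · linear_combination 3 * x 0 ^ 2 * hab
    · linear_combination 3 * x 1 ^ 2 * hab

/-- For `f(x) = (−3x₁+x₁³+x₂³, −3x₂+x₁³+x₂³)`, a point is Pareto critical iff
it lies on the unit circle, and then the (unique) KKT vector is
`α = (x₁², x₂²)`. -/
theorem paretoCritical_unit_circle (x : EuclideanSpace ℝ (Fin 2)) :
    ((∃ α : Fin 2 → ℝ, (∀ i, 0 ≤ α i) ∧ α 0 + α 1 = 1 ∧
        α 0 • gradient circF1 x + α 1 • gradient circF2 x = 0) ↔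
      (x 0) ^ 2 + (x 1) ^ 2 = 1) ∧
    (∀ α : Fin 2 → ℝ, (∀ i, 0 ≤ α i) → α 0 + α 1 = 1 →
      α 0 • gradient circF1 x + α 1 • gradient circF2 x = 0 →
      α 0 = (x 0) ^ 2 ∧ α 1 = (x 1) ^ 2) := by
  refine ⟨⟨?_, ?_⟩, fun α _ hα h => (weighted_gradient_circF_eq_zero_iff x hα).1 h⟩
  · rintro ⟨α, -, hα, h⟩
    obtain ⟨h0, h1⟩ := (weighted_gradient_circF_eq_zero_iff x hα).1 h
    rwa [← h0, ← h1]
  · intro hx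
    refine ⟨![x 0 ^ 2, x 1 ^ 2], ?_, hx, (weighted_gradient_circF_eq_zero_iff x hx).2 ⟨rfl, rfl⟩⟩
    simp only [Fin.forall_fin_two]
    exact ⟨sq_nonneg _, sq_nonneg _⟩
end

section
/- Let f₁, f₂ : ℝⁿ → ℝ be strictly convex and differentiable. Then every Pareto critical point of (f₁, f₂) is Pareto optimal. -/
/-! If `y` dominated the Pareto critical point `x`, the strict first-order condition of strict
convexity would make both directional derivatives `⟪∇fᵢ x, y - x⟫` negative, so no convex
combination of the two gradients could vanish. -/

open Set

theorem StrictConvexOn.comp_affineMap_of_injective {𝕜 E F β : Type*} [Field 𝕜] [LinearOrder 𝕜]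
    [AddCommGroup E] [AddCommGroup F] [AddCommMonoid β] [PartialOrder β]
    [Module 𝕜 E] [Module 𝕜 F] [SMul 𝕜 β] {f : F → β} {s : Set F}
    (hf : StrictConvexOn 𝕜 s f) (g : E →ᵃ[𝕜] F) (hg : Function.Injective g) :
    StrictConvexOn 𝕜 (g ⁻¹' s) (f ∘ g) :=
  ⟨hf.1.affine_preimage g, fun x hx y hy hxy a b ha hb hab => by
    simpa only [Function.comp_apply, Convex.combo_affine_apply hab] using
      hf.2 hx hy (hg.ne hxy) ha hb hab⟩

section FirstOrder

variable {E : Type*} [NormedAddCommGroup E] {f : E → ℝ} {s : Set E} {x y : E}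

theorem StrictConvexOn.fderiv_sub_lt [NormedSpace ℝ E] (hf : StrictConvexOn ℝ s f)
    (hx : x ∈ s) (hy : y ∈ s) (hxy : x ≠ y) {f' : E →L[ℝ] ℝ} (hf' : HasFDerivAt f f' x) :
    f' (y - x) < f y - f x := by
  set ℓ : ℝ →ᵃ[ℝ] E := AffineMap.lineMap x y
  have hline : StrictConvexOn ℝ (ℓ ⁻¹' s) (f ∘ ℓ) :=
    hf.comp_affineMap_of_injective ℓ (AffineMap.lineMap_injective ℝ hxy)
  have hderiv : HasDerivAt (f ∘ ℓ) (f' (y - x)) 0 :=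
    (by simpa [ℓ] using hf' : HasFDerivAt f f' (ℓ 0)).comp_hasDerivAt 0
      AffineMap.hasDerivAt_lineMap
  simpa [ℓ, slope_def_field] using
    hline.lt_slope_of_hasDerivAt (by simpa [ℓ] using hx) (by simpa [ℓ] using hy) one_pos hderiv

theorem StrictConvexOn.inner_gradient_sub_lt [InnerProductSpace ℝ E] [CompleteSpace E]
    (hf : StrictConvexOn ℝ s f) (hx : x ∈ s) (hy : y ∈ s) (hxy : x ≠ y) {g : E}
    (hg : HasGradientAt f g x) :
    inner ℝ g (y - x) < f y - f x :=
  hf.fderiv_sub_lt hx hy hxy (hasGradientAt_iff_hasFDerivAt.mp hg)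

end FirstOrder

/-- For two strictly convex differentiable objectives, every Pareto critical
point is Pareto optimal. -/
theorem paretoOptimal_of_paretoCritical_strictConvex {n : ℕ}
    (f₁ f₂ : EuclideanSpace ℝ (Fin n) → ℝ)
    (h₁ : StrictConvexOn ℝ Set.univ f₁) (h₂ : StrictConvexOn ℝ Set.univ f₂)
    (hd₁ : Differentiable ℝ f₁) (hd₂ : Differentiable ℝ f₂)
    (x : EuclideanSpace ℝ (Fin n))
    (hcrit : ∃ α : Fin 2 → ℝ, (∀ i, 0 ≤ α i) ∧ α 0 + α 1 = 1 ∧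
      α 0 • gradient f₁ x + α 1 • gradient f₂ x = 0) :
    ¬ ∃ y, (f₁ y ≤ f₁ x ∧ f₂ y ≤ f₂ x) ∧ (f₁ y < f₁ x ∨ f₂ y < f₂ x) := by
  rintro ⟨y, ⟨hle₁, hle₂⟩, hlt⟩
  obtain ⟨α, hα, hsum, hzero⟩ := hcrit
  have hxy : x ≠ y := by
    rintro rfl
    simp at hlt
  have hdir₁ : inner ℝ (gradient f₁ x) (y - x) < 0 :=
    (h₁.inner_gradient_sub_lt (mem_univ x) (mem_univ y) hxy (hd₁ x).hasGradientAt).trans_le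
      (sub_nonpos.mpr hle₁)
  have hdir₂ : inner ℝ (gradient f₂ x) (y - x) < 0 :=
    (h₂.inner_gradient_sub_lt (mem_univ x) (mem_univ y) hxy (hd₂ x).hasGradientAt).trans_le
      (sub_nonpos.mpr hle₂)
  have hneg : α 0 * inner ℝ (gradient f₁ x) (y - x) + α 1 * inner ℝ (gradient f₂ x) (y - x)
      < 0 :=
    convex_Iio (0 : ℝ) hdir₁ hdir₂ (hα 0) (hα 1) hsum
  have hcomb : α 0 * inner ℝ (gradient f₁ x) (y - x) + α 1 * inner ℝ (gradient f₂ x) (y - x)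
      = 0 := by
    simpa only [inner_add_left, real_inner_smul_left, inner_zero_left] using
      congrArg (fun v => inner ℝ v (y - x)) hzero
  exact hneg.ne hcomb
end
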